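/- Let G = (V,E) be a finite simple undirected graph. Then ν₂(G) = τ₂(G) = |V| - ν̂_G, i.e., the maximum size of a 2-matching of G equals the minimum size of a 2-vertex cover of G, and both equal |V| minus the weak vulnerability ν̂_G of G; moreover |V| - ν̂_G = min over independent sets S ⊆ V of (|V| - |S| + |N(S)|). -/

import Mathlib

open Finset

variable {V : Type*}

/-- `N(T)`: the set of vertices adjacent to at least one vertex of `T`. -/
def nbhd [Fintype V] [DecidableEq V] (G : SimpleGraph V) [DecidableRel G.Adj]
    (T : Finset V) : Finset V :=
  Finset.univ.filter fun j => ∃ i ∈ T, G.Adj i j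

/-- The vulnerability function `v_G(T) = |T| - |N(T)|`. -/
def vuln [Fintype V] [DecidableEq V] (G : SimpleGraph V) [DecidableRel G.Adj]
    (T : Finset V) : ℤ :=
  (T.card : ℤ) - ((nbhd G T).card : ℤ)

/-- `S` is an independent set of `G`. -/
def IsIndepF (G : SimpleGraph V) (S : Finset V) : Prop :=
  ∀ i ∈ S, ∀ j ∈ S, ¬ G.Adj i j

/-- `w` is a 2-matching of `H`: weights `0`, `1` or `2` on the edges such that for every vertex
the sum of the weights of the incident edges is at most 2. -/
def IsTwoMatching {W : Type*} (H : SimpleGraph W) (w : Sym2 W → ℕ) : Prop :=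
  (∀ e ∈ H.edgeSet, w e ≤ 2) ∧ ∀ v : W, ∑ᶠ e ∈ H.incidenceSet v, w e ≤ 2

/-- `u` is a 2-vertex cover of `H`: weights `0`, `1` or `2` on the vertices such that for every
edge the sum of the weights of its endpoints is at least 2. -/
def IsTwoVertexCover {W : Type*} (H : SimpleGraph W) (u : W → ℕ) : Prop :=
  (∀ i, u i ≤ 2) ∧ ∀ i j, H.Adj i j → 2 ≤ u i + u j

/-!
Weak duality: for a 2-matching `w` and a 2-vertex cover `u`,
`2 ∑ w ≤ ∑_{ab ∈ E} w(ab) (u a + u b) = ∑_v u v ∑_{e ∋ v} w e ≤ 2 ∑ u`.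
Every `T ⊆ V` yields the 2-vertex cover `1_{V \ T} + 1_{N(T)}` of size `|V| - v_G(T)`, and every
2-vertex cover dominates the one built from its zero set, so `τ₂ = |V| - ν̂_G`; the zero set of a
cover is independent, whence the minimum over independent sets. A 2-matching of size `|V| - ν̂_G`
comes from the deficiency version of Hall's theorem: as `|S| ≤ |N(S)| + ν̂_G` for all `S`, there is
an injection `i ↦ f i ∈ N(i)` defined on all but `ν̂_G` vertices, and the edges `{i, f i}`, counted
with multiplicity, form a 2-matching, since each vertex `v` is hit at most once as `i` and at most
once as `f i`.
-/

open SimpleGraph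

theorem Finset.exists_injective_of_card_le_biUnion_card_add {ι α : Type*} [Fintype ι]
    [DecidableEq α] (t : ι → Finset α) (d : ℕ)
    (h : ∀ s : Finset ι, #s ≤ #(s.biUnion t) + d) :
    ∃ D : Finset ι, ∃ f : D → α, Function.Injective f ∧ (∀ i : D, f i ∈ t i) ∧
      Fintype.card ι ≤ #D + d := by
  -- padding every `t i` with the same `d` new elements turns the deficiency into Hall's condition
  have hall : ∀ s : Finset ι,
      #s ≤ #(s.biUnion fun i => (t i).disjSum (univ : Finset (Fin d))) := by
    intro s
    rcases s.eq_empty_or_nonempty with rfl | ⟨i, hi⟩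
    · simp
    have hpad : s.biUnion (fun i => (t i).disjSum (univ : Finset (Fin d))) =
        (s.biUnion t).disjSum univ := by
      ext (x | x) <;> simp only [mem_biUnion, inl_mem_disjSum, inr_mem_disjSum, mem_univ, and_true]
      exact iff_true_intro ⟨i, hi⟩
    rw [hpad, card_disjSum, card_univ, Fintype.card_fin]
    exact h s
  obtain ⟨f, hf_inj, hf_mem⟩ := (all_card_le_biUnion_card_iff_exists_injective _).1 hall
  set D := univ.filter fun i => (f i).isLeft
  refine ⟨D, fun i => (f i).getLeft (mem_filter.1 i.2).2, fun i j hij => ?_, fun i => ?_, ?_⟩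
  · apply Subtype.ext (hf_inj _)
    rw [← Sum.inl_getLeft (f i) (mem_filter.1 i.2).2,
      ← Sum.inl_getLeft (f j) (mem_filter.1 j.2).2]
    exact congrArg Sum.inl hij
  · have := hf_mem i
    rwa [← Sum.inl_getLeft (f i) (mem_filter.1 i.2).2, inl_mem_disjSum] at this
  · have hright : #(univ.filter fun i => ¬ (f i).isLeft) ≤ d := by
      calc _ ≤ #((univ : Finset (Fin d)).map Function.Embedding.inr) :=
            card_le_card_of_injOn f (fun i hi => ?_) hf_inj.injOn
        _ = d := by simp
      obtain ⟨k, hk⟩ := Sum.isRight_iff.1 (Sum.not_isLeft.1 (mem_filter.1 hi).2)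
      simp [hk]
    have := card_filter_add_card_filter_not (s := (univ : Finset ι)) (fun i => (f i).isLeft)
    rw [card_univ] at this
    simp only [D]
    omega

section TwoMatching

variable [Fintype V] [DecidableEq V] {G : SimpleGraph V} [DecidableRel G.Adj]

omit [DecidableEq V] in
lemma finsum_mem_edgeSet_eq_sum (w : Sym2 V → ℕ) :
    ∑ᶠ e ∈ G.edgeSet, w e = ∑ e ∈ G.edgeFinset, w e := by
  rw [← coe_edgeFinset, finsum_mem_coe_finset]

lemma finsum_mem_incidenceSet_eq_sum (w : Sym2 V → ℕ) (v : V) :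
    ∑ᶠ e ∈ G.incidenceSet v, w e = ∑ e ∈ G.incidenceFinset v, w e := by
  rw [← coe_incidenceFinset, finsum_mem_coe_finset]

theorem IsTwoMatching.finsum_le_sum_of_isTwoVertexCover {w : Sym2 V → ℕ} {u : V → ℕ}
    (hw : IsTwoMatching G w) (hu : IsTwoVertexCover G u) : ∑ᶠ e ∈ G.edgeSet, w e ≤ ∑ i, u i := by
  have hedge : ∀ e ∈ G.edgeFinset, 2 ≤ ∑ v ∈ e.toFinset, u v := by
    intro e he
    induction e with
    | h a b =>
      have hab : G.Adj a b := mem_edgeFinset.1 he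
      rw [Sym2.toFinset_mk_eq, sum_pair hab.ne]
      exact hu.2 a b hab
  have hcount : ∑ e ∈ G.edgeFinset, ∑ v ∈ e.toFinset, w e * u v
      = ∑ v, ∑ e ∈ G.incidenceFinset v, w e * u v :=
    sum_comm' fun e v => by simp [mem_incidenceFinset, incidenceSet, and_comm]
  suffices 2 * ∑ e ∈ G.edgeFinset, w e ≤ 2 * ∑ i, u i by
    rw [finsum_mem_edgeSet_eq_sum]; omega
  calc 2 * ∑ e ∈ G.edgeFinset, w e
      ≤ ∑ e ∈ G.edgeFinset, w e * ∑ v ∈ e.toFinset, u v := by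
        rw [mul_sum]
        exact sum_le_sum fun e he => by rw [mul_comm]; exact Nat.mul_le_mul_left _ (hedge e he)
    _ = ∑ v, u v * ∑ e ∈ G.incidenceFinset v, w e := by
        simp_rw [mul_sum, hcount, mul_comm]
    _ ≤ ∑ v, u v * 2 := sum_le_sum fun v _ =>
        Nat.mul_le_mul_left _ ((finsum_mem_incidenceSet_eq_sum w v).symm.trans_le (hw.2 v))
    _ = 2 * ∑ i, u i := by rw [← sum_mul, mul_comm]

theorem exists_isTwoMatching_of_injective {ι : Type*} [Fintype ι] {a b : ι → V}
    (ha : Function.Injective a) (hb : Function.Injective b) (hadj : ∀ i, G.Adj (a i) (b i)) :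
    ∃ w : Sym2 V → ℕ, IsTwoMatching G w ∧ ∑ᶠ e ∈ G.edgeSet, w e = Fintype.card ι := by
  classical
  set p : ι → Sym2 V := fun i => s(a i, b i)
  have hp : ∀ i, p i ∈ G.edgeFinset := fun i => mem_edgeFinset.2 (hadj i)
  have hdeg : ∀ v, ∑ e ∈ G.incidenceFinset v, #{i | p i = e} ≤ 2 := by
    intro v
    rw [sum_card_fiberwise_eq_card_filter]
    have hsub : ({i | p i ∈ G.incidenceFinset v} : Finset ι) ⊆
        ({i | a i = v} : Finset ι) ∪ ({i | b i = v} : Finset ι) := by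
      intro i hi
      simp only [mem_filter, mem_univ, true_and, mem_incidenceFinset, incidenceSet,
        Set.mem_ofPred_eq, p, Sym2.mem_iff] at hi
      rcases hi.2 with rfl | rfl <;> simp
    have hone : ∀ f : ι → V, Function.Injective f → #({i | f i = v} : Finset ι) ≤ 1 :=
      fun f hf => card_le_one.2 fun i hi j hj =>
        hf ((mem_filter.1 hi).2.trans (mem_filter.1 hj).2.symm)
    calc _ ≤ _ := card_le_card hsub
      _ ≤ _ := card_union_le _ _
      _ ≤ 2 := by have := hone a ha; have := hone b hb; omega
  refine ⟨fun e => #{i | p i = e}, ⟨fun e he => ?_, fun v => ?_⟩, ?_⟩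
  · induction e with
    | h x y =>
      calc #{i | p i = s(x, y)} ≤ ∑ e ∈ G.incidenceFinset x, #{i | p i = e} :=
            single_le_sum (f := fun e => #{i | p i = e}) (fun _ _ => Nat.zero_le _)
              ((mem_incidenceFinset _ _ _).2 ⟨he, Sym2.mem_mk_left x y⟩)
        _ ≤ 2 := hdeg x
  · rw [finsum_mem_incidenceSet_eq_sum]; exact hdeg v
  · rw [finsum_mem_edgeSet_eq_sum, sum_card_fiberwise_eq_card_filter,
      filter_true_of_mem fun i _ => hp i, card_univ]

end TwoMatching

section Vulnerability

variable [Fintype V] [DecidableEq V] (G : SimpleGraph V) [DecidableRel G.Adj]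

@[simp]
lemma mem_nbhd {T : Finset V} {j : V} : j ∈ nbhd G T ↔ ∃ i ∈ T, G.Adj i j := by
  simp [nbhd]

lemma biUnion_neighborFinset (T : Finset V) :
    T.biUnion (fun i => G.neighborFinset i) = nbhd G T := by
  ext j; simp

def coverOf (T : Finset V) (i : V) : ℕ :=
  (if i ∈ T then 0 else 1) + (if i ∈ nbhd G T then 1 else 0)

lemma isTwoVertexCover_coverOf (T : Finset V) : IsTwoVertexCover G (coverOf G T) := by
  refine ⟨fun i => by unfold coverOf; split_ifs <;> omega, fun i j hij => ?_⟩
  have hi : i ∈ T → j ∈ nbhd G T := fun h => (mem_nbhd G).2 ⟨i, h, hij⟩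
  have hj : j ∈ T → i ∈ nbhd G T := fun h => (mem_nbhd G).2 ⟨j, h, hij.symm⟩
  unfold coverOf
  split_ifs <;> simp_all

lemma sum_coverOf (T : Finset V) :
    ((∑ i, coverOf G T i : ℕ) : ℤ) = Fintype.card V - vuln G T := by
  have hT : ∑ i, (if i ∈ T then 0 else 1 : ℕ) = Fintype.card V - #T := by
    rw [sum_ite]; simp [filter_not, card_univ_sdiff]
  have hN : ∑ i, (if i ∈ nbhd G T then 1 else 0 : ℕ) = #(nbhd G T) := by
    rw [sum_boole, filter_mem_eq_inter, univ_inter, Nat.cast_id]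
  simp only [vuln, coverOf, sum_add_distrib, hT, hN]
  push_cast [card_le_univ T]
  ring

lemma vuln_empty : vuln G ∅ = 0 := by
  simp [vuln, nbhd]

lemma filter_coverOf_eq_zero (T : Finset V) :
    ({i | coverOf G T i = 0} : Finset V) = T \ nbhd G T := by
  ext i
  simp only [mem_filter, mem_univ, true_and, mem_sdiff]
  unfold coverOf
  split_ifs <;> simp_all

variable {G}

omit [DecidableEq V] [DecidableRel G.Adj] in
lemma IsTwoVertexCover.isIndepF_filter_eq_zero {u : V → ℕ} (hu : IsTwoVertexCover G u) :
    IsIndepF G {i | u i = 0} := by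
  intro i hi j hj hij
  have := hu.2 i j hij
  simp only [mem_filter, mem_univ, true_and] at hi hj
  omega

lemma IsTwoVertexCover.coverOf_filter_eq_zero_le {u : V → ℕ} (hu : IsTwoVertexCover G u)
    (i : V) : coverOf G {i | u i = 0} i ≤ u i := by
  have hnbhd : i ∈ nbhd G {i | u i = 0} → u i = 2 := by
    simp only [mem_nbhd, mem_filter, mem_univ, true_and]
    rintro ⟨j, hj, hji⟩
    have := hu.2 j i hji; have := hu.1 i; omega
  unfold coverOf
  split_ifs <;> simp_all
  omega

lemma IsTwoVertexCover.card_sub_vuln_le_sum {u : V → ℕ} (hu : IsTwoVertexCover G u) :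
    (Fintype.card V : ℤ) - vuln G {i | u i = 0} ≤ ∑ i, u i := by
  rw [← sum_coverOf]
  exact_mod_cast sum_le_sum fun i _ => hu.coverOf_filter_eq_zero_le i

variable (G)

lemma vuln_le_vuln_sdiff_nbhd (T : Finset V) : vuln G T ≤ vuln G (T \ nbhd G T) := by
  have := (isTwoVertexCover_coverOf G T).card_sub_vuln_le_sum
  rw [filter_coverOf_eq_zero, sum_coverOf] at this
  linarith

lemma isIndepF_sdiff_nbhd (T : Finset V) : IsIndepF G (T \ nbhd G T) :=
  filter_coverOf_eq_zero G T ▸ (isTwoVertexCover_coverOf G T).isIndepF_filter_eq_zero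

variable {G}

theorem exists_isTwoMatching_of_vuln_le {d : ℕ} (h : ∀ T, vuln G T ≤ d) :
    ∃ w : Sym2 V → ℕ, IsTwoMatching G w ∧ Fintype.card V ≤ ∑ᶠ e ∈ G.edgeSet, w e + d := by
  obtain ⟨D, f, hf_inj, hf_adj, hD⟩ :=
    exists_injective_of_card_le_biUnion_card_add (fun i => G.neighborFinset i) d fun T => by
      have := h T; rw [vuln] at this; rw [biUnion_neighborFinset]; omega
  obtain ⟨w, hw, hsum⟩ := exists_isTwoMatching_of_injective Subtype.val_injective hf_inj
    fun i => (mem_neighborFinset _ _ _).1 (hf_adj i)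
  exact ⟨w, hw, by rw [hsum, Fintype.card_coe]; exact hD⟩

end Vulnerability

/-- For a finite simple undirected graph `G`, `ν₂(G) = τ₂(G) = |V| - ν̂_G`: the maximum size
of a 2-matching equals the minimum size of a 2-vertex cover, and both equal `|V|` minus the
weak vulnerability `ν̂_G`; moreover `|V| - ν̂_G` is the minimum over independent sets `S` of
`|V| - |S| + |N(S)|`. -/
theorem max2Matching_eq_min2VertexCover_eq_card_sub_weakVulnerability
    [Fintype V] [DecidableEq V] (G : SimpleGraph V) [DecidableRel G.Adj]
    (nu2 tau2 : ℕ) (nuHat : ℤ)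
    (h2m : IsGreatest {n : ℕ |
      ∃ w : Sym2 V → ℕ, IsTwoMatching G w ∧ ∑ᶠ e ∈ G.edgeSet, w e = n} nu2)
    (h2c : IsLeast {n : ℕ | ∃ u : V → ℕ, IsTwoVertexCover G u ∧ ∑ i, u i = n} tau2)
    (hHat : IsGreatest {x : ℤ | ∃ T : Finset V, vuln G T = x} nuHat) :
    (nu2 : ℤ) = (tau2 : ℤ) ∧ (nu2 : ℤ) = (Fintype.card V : ℤ) - nuHat ∧
      IsLeast {x : ℤ | ∃ S : Finset V, IsIndepF G S ∧
          x = (Fintype.card V : ℤ) - (S.card : ℤ) + ((nbhd G S).card : ℤ)}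
        ((Fintype.card V : ℤ) - nuHat) := by
  have hvuln : ∀ T, vuln G T ≤ nuHat := fun T => hHat.2 ⟨T, rfl⟩
  obtain ⟨T, hT⟩ := hHat.1
  have hcoverT := isTwoVertexCover_coverOf G T
  have hsizeT : ((∑ i, coverOf G T i : ℕ) : ℤ) = Fintype.card V - nuHat := hT ▸ sum_coverOf G T
  have htau : (tau2 : ℤ) = Fintype.card V - nuHat := by
    obtain ⟨u, hu, rfl⟩ := h2c.1
    refine le_antisymm ?_ ((sub_le_sub_left (hvuln _) _).trans hu.card_sub_vuln_le_sum)
    exact hsizeT ▸ Nat.cast_le.2 (h2c.2 ⟨_, hcoverT, rfl⟩)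
  have hnu : (nu2 : ℤ) = Fintype.card V - nuHat := by
    obtain ⟨w, hw, rfl⟩ := h2m.1
    refine le_antisymm (hsizeT ▸ Nat.cast_le.2 (hw.finsum_le_sum_of_isTwoVertexCover hcoverT)) ?_
    obtain ⟨d, rfl⟩ := Int.eq_ofNat_of_zero_le ((vuln_empty G).ge.trans (hvuln ∅))
    obtain ⟨w', hw', hsize⟩ := exists_isTwoMatching_of_vuln_le hvuln
    have := h2m.2 ⟨w', hw', rfl⟩
    omega
  have hS : vuln G (T \ nbhd G T) = nuHat :=
    le_antisymm (hvuln _) (hT ▸ vuln_le_vuln_sdiff_nbhd G T)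
  refine ⟨htau ▸ hnu, hnu,
    ⟨T \ nbhd G T, isIndepF_sdiff_nbhd G T, by rw [← hS, vuln]; ring⟩, ?_⟩
  rintro x ⟨S, -, rfl⟩
  have := hvuln S
  rw [vuln] at this
  linarith
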